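/- For n ≥ 0, the number of sequences (v_1, ..., v_n) with 1 ≤ v_i ≤ i for all i, satisfying for all 1 ≤ i < j ≤ n that v_j − (j − i) ∉ [1, v_i − 1], equals the Catalan number C_n = (1/(n+1)) * binomial(2n, n). -/

import Mathlib

/-!
With `w i = i + 1 - v i ∈ [0, i]` the condition reads: if `w j ≤ i < j` then `w j ≤ w i`.
The values `k` that may follow an admissible word `l` form a set `A l` containing `0` and
`l.length`, and `A (l ++ [k]) = {l.length + 1} ∪ {a ∈ A l | a ≤ k}`. So a word with `d`
possible successors has children with `2, 3, …, d + 1` possible successors: this is the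
generating tree of the Catalan numbers. The number of length-`m` continuations of a word with
`k + 1` possible successors is the ballot number `gc m k`, which obeys the same recurrence
`gc (m + 1) k = ∑_{r ≤ k} gc m (r + 1)`; the empty word has `k = 0`, and `gc n 0 = cat n`.
-/

def gc (n k : ℕ) : ℚ := ((k : ℚ) + 1) / (2 * (n : ℚ) + (k : ℚ) + 1) * ((2 * n + k + 1).choose n : ℚ)

def cat (n : ℕ) : ℚ := 1 / ((n : ℚ) + 1) * ((2 * n).choose n : ℚ)

def Cond {n : ℕ} (u : Fin n → ℕ) : Prop :=
  ∀ i j : Fin n, i < j →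
    ¬(1 ≤ (u j : ℤ) - (((j : ℕ) : ℤ) - ((i : ℕ) : ℤ)) ∧
      (u j : ℤ) - (((j : ℕ) : ℤ) - ((i : ℕ) : ℤ)) ≤ (u i : ℤ) - 1)

open Finset

lemma cast_choose_succ_succ (n k : ℕ) :
    ((n + 1).choose (k + 1) : ℚ) = (n + 1) / (k + 1) * n.choose k := by
  rw [div_mul_eq_mul_div, eq_div_iff (by positivity)]
  exact_mod_cast (Nat.add_one_mul_choose_eq n k).symm

lemma cast_choose_succ_right (n k : ℕ) (h : k ≤ n) :
    (n.choose (k + 1) : ℚ) = (n - k) / (k + 1) * n.choose k := by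
  rw [div_mul_eq_mul_div, eq_div_iff (by positivity)]
  have := Nat.choose_succ_right_eq n k
  rw [← Nat.cast_inj (R := ℚ)] at this
  push_cast [h] at this
  linear_combination this

lemma gc_zero_left (k : ℕ) : gc 0 k = 1 := by
  simp [gc, Nat.cast_add_one_ne_zero]

lemma gc_zero_right (n : ℕ) : gc n 0 = cat n := by
  unfold gc cat
  rw [add_zero, ← Nat.choose_symm_half, cast_choose_succ_succ]
  push_cast
  field_simp
  ring

lemma gc_succ_zero (m : ℕ) : gc (m + 1) 0 = gc m 1 := by
  unfold gc
  rw [show 2 * (m + 1) + 0 + 1 = (2 * m + 2) + 1 by ring, show 2 * m + 1 + 1 = 2 * m + 2 by ring,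
    cast_choose_succ_succ]
  push_cast
  field_simp
  ring

lemma gc_succ_succ (m k : ℕ) : gc (m + 1) (k + 1) = gc (m + 1) k + gc m (k + 2) := by
  unfold gc
  rw [show 2 * (m + 1) + (k + 1) + 1 = (2 * m + k + 3) + 1 by ring,
    show 2 * (m + 1) + k + 1 = 2 * m + k + 3 by ring, show 2 * m + (k + 2) + 1 = 2 * m + k + 3 by ring,
    cast_choose_succ_succ, cast_choose_succ_right _ _ (by omega)]
  push_cast
  field_simp
  ring

lemma gc_succ (m k : ℕ) : gc (m + 1) k = ∑ r ∈ range (k + 1), gc m (r + 1) := by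
  induction k with
  | zero => simp [gc_succ_zero]
  | succ k ih => rw [gc_succ_succ, ih, sum_range_succ _ (k + 1)]

theorem Finset.sum_card_filter_le {α M : Type*} [LinearOrder α] [AddCommMonoid M] (s : Finset α)
    (g : ℕ → M) : ∑ a ∈ s, g #{b ∈ s | b ≤ a} = ∑ r ∈ range #s, g (r + 1) := by
  induction s using Finset.induction_on_max with
  | empty => simp
  | insert a s hlt ih =>
    have ha : a ∉ s := fun h => lt_irrefl a (hlt a h)
    rw [sum_insert ha, card_insert_of_notMem ha, sum_range_succ, add_comm]
    congr 1
    · rw [← ih]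
      refine sum_congr rfl fun b hb => ?_
      rw [filter_insert, if_neg (not_le.2 (hlt b hb))]
    · rw [filter_true_of_mem fun b hb => ?_, card_insert_of_notMem ha]
      rcases mem_insert.1 hb with rfl | hb
      exacts [le_rfl, (hlt b hb).le]

def IsAdmissible (l : List ℕ) : Prop :=
  ∀ j < l.length, l.getD j 0 ≤ j ∧ ∀ i < j, l.getD j 0 ≤ i → l.getD j 0 ≤ l.getD i 0

def admissibleNext (l : List ℕ) : Finset ℕ :=
  {k ∈ range (l.length + 1) | ∀ i < l.length, k ≤ i → k ≤ l.getD i 0}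

def admissibleLists : ℕ → Finset (List ℕ)
  | 0 => {[]}
  | n + 1 => (admissibleLists n).biUnion fun l => (admissibleNext l).image (l ++ [·])

lemma mem_admissibleNext {l : List ℕ} {k : ℕ} :
    k ∈ admissibleNext l ↔ k ≤ l.length ∧ ∀ i < l.length, k ≤ i → k ≤ l.getD i 0 := by
  simp [admissibleNext]

lemma zero_mem_admissibleNext (l : List ℕ) : 0 ∈ admissibleNext l :=
  mem_admissibleNext.2 ⟨Nat.zero_le _, fun _ _ _ => Nat.zero_le _⟩

lemma admissibleNext_append_singleton (l : List ℕ) (k : ℕ) :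
    admissibleNext (l ++ [k]) = insert (l.length + 1) {m ∈ admissibleNext l | m ≤ k} := by
  ext m
  simp only [mem_admissibleNext, mem_insert, mem_filter, List.length_append, List.length_singleton]
  constructor
  · rintro ⟨hm, hcond⟩
    refine or_iff_not_imp_left.2 fun hne => ⟨⟨by omega, fun i hi hmi => ?_⟩, ?_⟩
    · simpa only [List.getD_append _ _ _ _ hi] using hcond i (by omega) hmi
    · simpa using hcond l.length (by omega) (by omega)
  · rintro (rfl | ⟨⟨hm, hcond⟩, hmk⟩)
    · exact ⟨le_rfl, fun i hi hmi => by omega⟩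
    · refine ⟨by omega, fun i hi hmi => ?_⟩
      rcases Nat.lt_or_ge i l.length with hil | hil
      · rw [List.getD_append _ _ _ _ hil]; exact hcond i hil hmi
      · obtain rfl : i = l.length := by omega
        simpa

lemma card_admissibleNext_append_singleton (l : List ℕ) (k : ℕ) :
    #(admissibleNext (l ++ [k])) = #{m ∈ admissibleNext l | m ≤ k} + 1 := by
  rw [admissibleNext_append_singleton, card_insert_of_notMem]
  intro h
  have := (mem_admissibleNext.1 (mem_filter.1 h).1).1
  omega

lemma isAdmissible_append_singleton {l : List ℕ} {k : ℕ} :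
    IsAdmissible (l ++ [k]) ↔ IsAdmissible l ∧ k ∈ admissibleNext l := by
  have hl : ∀ i < l.length, (l ++ [k]).getD i 0 = l.getD i 0 := fun i hi =>
    List.getD_append _ _ _ _ hi
  have hk : (l ++ [k]).getD l.length 0 = k := by simp
  simp only [IsAdmissible, mem_admissibleNext, List.length_append, List.length_singleton]
  constructor
  · intro h
    refine ⟨fun j hj => ?_, ?_⟩
    · have := h j (by omega)
      simp only [hl j hj] at this
      exact ⟨this.1, fun i hij => by simpa only [hl i (by omega)] using this.2 i hij⟩
    · have := h l.length (by omega)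
      simp only [hk] at this
      exact ⟨this.1, fun i hi => by simpa only [hl i hi] using this.2 i hi⟩
  · rintro ⟨h, hk₁, hk₂⟩ j hj
    rcases Nat.lt_or_ge j l.length with hj' | hj'
    · simp only [hl j hj']
      exact ⟨(h j hj').1, fun i hij => by simpa only [hl i (by omega)] using (h j hj').2 i hij⟩
    · obtain rfl : j = l.length := by omega
      simp only [hk]
      exact ⟨hk₁, fun i hi => by simpa only [hl i hi] using hk₂ i hi⟩

lemma mem_admissibleLists {n : ℕ} {l : List ℕ} :
    l ∈ admissibleLists n ↔ l.length = n ∧ IsAdmissible l := by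
  induction n generalizing l with
  | zero =>
    simp only [admissibleLists, mem_singleton, List.length_eq_zero_iff, iff_self_and]
    rintro rfl j hj
    simp at hj
  | succ n ih =>
    simp only [admissibleLists, mem_biUnion, mem_image]
    constructor
    · rintro ⟨l, hl, k, hk, rfl⟩
      rw [ih] at hl
      exact ⟨by simp [hl.1], isAdmissible_append_singleton.2 ⟨hl.2, hk⟩⟩
    · rintro ⟨hlen, hl⟩
      obtain rfl | ⟨l, k, rfl⟩ := l.eq_nil_or_concat'
      · simp at hlen
      obtain ⟨hl, hk⟩ := isAdmissible_append_singleton.1 hl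
      exact ⟨l, ih.2 ⟨by simpa using hlen, hl⟩, k, hk, rfl⟩

lemma sum_admissibleLists_succ {M : Type*} [AddCommMonoid M] (n : ℕ) (g : ℕ → M) :
    ∑ l ∈ admissibleLists (n + 1), g #(admissibleNext l) =
      ∑ l ∈ admissibleLists n, ∑ r ∈ range #(admissibleNext l), g (r + 2) := by
  rw [admissibleLists, sum_biUnion]
  · refine sum_congr rfl fun l _ => ?_
    rw [sum_image fun k _ k' _ h => by simpa using h,
      ← sum_card_filter_le (admissibleNext l) fun r => g (r + 1)]
    simp only [card_admissibleNext_append_singleton]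
  · intro l _ l' _ hne
    refine disjoint_left.2 fun a ha ha' => hne ?_
    obtain ⟨k, -, rfl⟩ := mem_image.1 ha
    obtain ⟨k', -, h⟩ := mem_image.1 ha'
    exact (List.append_inj' h rfl).1.symm

lemma sum_gc_admissibleLists (n m : ℕ) :
    ∑ l ∈ admissibleLists n, gc m (#(admissibleNext l) - 1) = gc (n + m) 0 := by
  induction n generalizing m with
  | zero => simp [admissibleLists, admissibleNext]
  | succ n ih =>
    rw [sum_admissibleLists_succ (g := fun c => gc m (c - 1)), show n + 1 + m = n + (m + 1) by ring,
      ← ih (m + 1)]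
    refine sum_congr rfl fun l _ => ?_
    obtain ⟨c, hc⟩ : ∃ c, #(admissibleNext l) = c + 1 :=
      Nat.exists_eq_add_one.2 (card_pos.2 ⟨0, zero_mem_admissibleNext l⟩)
    rw [hc, gc_succ]
    rfl

lemma card_admissibleLists (n : ℕ) : (#(admissibleLists n) : ℚ) = gc n 0 := by
  simpa [gc_zero_left] using sum_gc_admissibleLists n 0

def gapList {n : ℕ} (v : Fin n → ℕ) : List ℕ := List.ofFn fun i => (i : ℕ) + 1 - v i

@[simp] lemma length_gapList {n : ℕ} (v : Fin n → ℕ) : (gapList v).length = n := by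
  simp [gapList]

lemma getD_gapList {n : ℕ} (v : Fin n → ℕ) (i : Fin n) : (gapList v).getD i 0 = i + 1 - v i := by
  simp [gapList]

lemma isAdmissible_gapList_iff {n : ℕ} {v : Fin n → ℕ} (hv : ∀ i, v i ≤ i + 1) :
    IsAdmissible (gapList v) ↔ (∀ i, 1 ≤ v i) ∧ Cond v := by
  simp only [IsAdmissible, length_gapList]
  constructor
  · intro h
    refine ⟨fun i => ?_, fun i j hij => ?_⟩
    · have := (h i i.2).1
      rw [getD_gapList] at this
      have := hv i
      omega
    · have := (h j j.2).2 i hij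
      rw [getD_gapList, getD_gapList] at this
      have := hv i
      have := hv j
      omega
  · rintro ⟨hpos, hcond⟩ j hj
    refine ⟨?_, fun i hij => ?_⟩
    · have := hpos ⟨j, hj⟩
      rw [getD_gapList v ⟨j, hj⟩, Fin.val_mk]
      omega
    · have := hcond ⟨i, hij.trans hj⟩ ⟨j, hj⟩ hij
      rw [getD_gapList v ⟨j, hj⟩, getD_gapList v ⟨i, hij.trans hj⟩]
      have := hv ⟨j, hj⟩
      have := hv ⟨i, hij.trans hj⟩
      dsimp only at *
      omega

lemma ncard_eq_card_admissibleLists (n : ℕ) :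
    {v : Fin n → ℕ | (∀ i : Fin n, 1 ≤ v i ∧ v i ≤ (i : ℕ) + 1) ∧ Cond v}.ncard =
      #(admissibleLists n) := by
  rw [← Set.ncard_coe_finset]
  refine Set.ncard_congr (fun v _ => gapList v) ?_ ?_ ?_
  · rintro v ⟨hbox, hcond⟩
    rw [mem_coe, mem_admissibleLists, isAdmissible_gapList_iff fun i => (hbox i).2]
    exact ⟨length_gapList v, fun i => (hbox i).1, hcond⟩
  · rintro v w ⟨hv, -⟩ ⟨hw, -⟩ h
    funext i
    have := congrArg (List.getD · i 0) h
    simp only [getD_gapList] at this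
    have := hv i
    have := hw i
    omega
  · intro l hl
    obtain ⟨rfl, hadm⟩ := mem_admissibleLists.1 hl
    set v : Fin l.length → ℕ := fun i => i + 1 - l.getD i 0
    have hgap : gapList v = l := by
      refine List.ext_getElem (length_gapList v) fun i h h' => ?_
      have := (hadm i h').1
      rw [← List.getD_eq_getElem _ 0, ← List.getD_eq_getElem _ 0, getD_gapList v ⟨i, h'⟩]
      simp only [v]
      omega
    have hv : ∀ i, v i ≤ i + 1 := fun i => Nat.sub_le _ _
    obtain ⟨hpos, hcond⟩ := (isAdmissible_gapList_iff hv).1 (hgap.symm ▸ hadm)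
    exact ⟨v, ⟨fun i => ⟨hpos i, hv i⟩, hcond⟩, hgap⟩

theorem stmt5 (n : ℕ) :
    ({v : Fin n → ℕ | (∀ i : Fin n, 1 ≤ v i ∧ v i ≤ (i : ℕ) + 1) ∧ Cond v}.ncard : ℚ)
      = cat n := by
  rw [ncard_eq_card_admissibleLists, card_admissibleLists, gc_zero_right]
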